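/- For integers j ≥ 1 and parameter ζ, ∑_{i=0}^{j} ∑_{k=0}^{i-1} (-1)^i q^{i(i-1)/2} [j choose i]_q · ζ q^k/(1 - ζ q^k)^2 = - ((q;q)_{j-1}/(ζ;q)_j) · ∑_{k=0}^{j-1} ζ q^k/(1 - ζ q^k). -/

import Mathlib

/-!
Write `j = m + 1`. After swapping the two sums, the inner sums are tails of alternating sums of
`q`-binomial coefficients, which the `q`-Pascal rule evaluates:
`∑_{i ≤ k} (-1)^i q^{C(i,2)} [m+1, i] = (-1)^k q^{C(k+1,2)} [m, k]`, and the full sum vanishes.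
The left side thus becomes `-ζ ∑_k (-1)^k q^{C(k+1,2)} [m, k] q^k / (1 - ζ q^k)^2`, which is `-ζ`
times the `ζ`-derivative of the partial fraction expansion
`∑_k (-1)^k q^{C(k+1,2)} [m, k] / (1 - ζ q^k) = (q;q)_m / (ζ;q)_{m+1}`.
That expansion follows by induction on `m`, since both sides satisfy
`S_{m+1}(ζ) = S_m(ζ) - q^{m+1} S_m(qζ)`, and the logarithmic derivative of `(ζ;q)_{m+1}`
produces the sum on the right.
-/

noncomputable def qPoch (z q : ℝ) (m : ℕ) : ℝ := ∏ j ∈ Finset.range m, (1 - z * q ^ j)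

noncomputable def qBinom (q : ℝ) (m l : ℕ) : ℝ :=
  if l ≤ m then qPoch q q m / (qPoch q q l * qPoch q q (m - l)) else 0

open Finset Filter Topology

theorem qPoch_zero (z q : ℝ) : qPoch z q 0 = 1 := rfl

theorem qPoch_succ (z q : ℝ) (m : ℕ) : qPoch z q (m + 1) = qPoch z q m * (1 - z * q ^ m) :=
  prod_range_succ _ _

theorem qPoch_succ' (z q : ℝ) (m : ℕ) : qPoch z q (m + 1) = (1 - z) * qPoch (q * z) q m := by
  rw [qPoch, qPoch, prod_range_succ']
  simp only [pow_zero, mul_one, pow_succ]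
  rw [mul_comm]
  congr 1
  exact prod_congr rfl fun _ _ => by ring

theorem qPoch_ne_zero_iff {z q : ℝ} {m : ℕ} : qPoch z q m ≠ 0 ↔ ∀ k < m, 1 - z * q ^ k ≠ 0 := by
  simp [qPoch, prod_ne_zero_iff]

theorem qPoch_self_pos {q : ℝ} (hq0 : 0 < q) (hq1 : q < 1) (m : ℕ) : 0 < qPoch q q m :=
  prod_pos fun k _ => by
    nlinarith [mul_lt_mul_of_pos_right hq1 (pow_pos hq0 k), pow_le_one₀ hq0.le hq1.le (n := k)]

theorem qBinom_of_le {q : ℝ} {m l : ℕ} (h : l ≤ m) :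
    qBinom q m l = qPoch q q m / (qPoch q q l * qPoch q q (m - l)) := if_pos h

theorem qBinom_of_lt {q : ℝ} {m l : ℕ} (h : m < l) : qBinom q m l = 0 := if_neg h.not_ge

theorem qBinom_zero_right {q : ℝ} (hq : ∀ n, qPoch q q n ≠ 0) (m : ℕ) : qBinom q m 0 = 1 := by
  simp [qBinom_of_le, qPoch_zero, hq]

theorem qBinom_self {q : ℝ} (hq : ∀ n, qPoch q q n ≠ 0) (m : ℕ) : qBinom q m m = 1 := by
  simp [qBinom_of_le, qPoch_zero, hq]

theorem qBinom_succ_succ {q : ℝ} (hq : ∀ n, qPoch q q n ≠ 0) (m k : ℕ) :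
    qBinom q (m + 1) (k + 1) = qBinom q m k + q ^ (k + 1) * qBinom q m (k + 1) := by
  rcases lt_trichotomy k m with hkm | rfl | hmk
  · obtain ⟨d, rfl⟩ := Nat.exists_eq_add_of_lt hkm
    rw [qBinom_of_le (by omega), qBinom_of_le (by omega), qBinom_of_le (by omega),
      show k + d + 1 + 1 - (k + 1) = d + 1 by omega, show k + d + 1 - k = d + 1 by omega,
      show k + d + 1 - (k + 1) = d by omega, qPoch_succ _ _ (k + d + 1), qPoch_succ _ _ (k + d),
      qPoch_succ _ _ k, qPoch_succ _ _ d]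
    have := hq k
    have := hq d
    have := qPoch_ne_zero_iff.mp (hq (k + 1)) k (by omega)
    have := qPoch_ne_zero_iff.mp (hq (d + 1)) d (by omega)
    field_simp
    ring
  · simp [qBinom_self hq, qBinom_of_lt (Nat.lt_succ_self k)]
  · simp [qBinom_of_lt, hmk, Nat.lt_succ_of_lt hmk]

theorem qBinom_succ_succ' {q : ℝ} (hq : ∀ n, qPoch q q n ≠ 0) {m k : ℕ} (hk : k ≤ m) :
    qBinom q (m + 1) (k + 1) = qBinom q m (k + 1) + q ^ (m - k) * qBinom q m k := by
  obtain ⟨d, rfl⟩ := Nat.exists_eq_add_of_le hk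
  rw [qBinom_succ_succ hq, Nat.add_sub_cancel_left]
  rcases d with _ | d
  · simp [qBinom_self hq, qBinom_of_lt]
  rw [qBinom_of_le (by omega), qBinom_of_le (by omega),
    show k + (d + 1) - (k + 1) = d by omega, show k + (d + 1) - k = d + 1 by omega,
    show k + (d + 1) = k + d + 1 by omega, qPoch_succ _ _ (k + d), qPoch_succ _ _ k,
    qPoch_succ _ _ d]
  have := hq k
  have := hq d
  have := qPoch_ne_zero_iff.mp (hq (k + 1)) k (by omega)
  have := qPoch_ne_zero_iff.mp (hq (d + 1)) d (by omega)
  field_simp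
  ring

noncomputable def altQBinom (q : ℝ) (m k : ℕ) : ℝ :=
  (-1) ^ k * q ^ ((k + 1).choose 2) * qBinom q m k

theorem altQBinom_of_lt {q : ℝ} {m k : ℕ} (h : m < k) : altQBinom q m k = 0 := by
  simp [altQBinom, qBinom_of_lt h]

theorem altQBinom_zero_right {q : ℝ} (hq : ∀ n, qPoch q q n ≠ 0) (m : ℕ) : altQBinom q m 0 = 1 := by
  simp [altQBinom, qBinom_zero_right hq]

theorem sum_range_succ_alternating_qBinom {q : ℝ} (hq : ∀ n, qPoch q q n ≠ 0) (m k : ℕ) :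
    ∑ i ∈ range (k + 1), (-1) ^ i * q ^ (i.choose 2) * qBinom q (m + 1) i = altQBinom q m k := by
  induction k with
  | zero => simp [altQBinom, qBinom_zero_right hq]
  | succ k ih =>
    rw [sum_range_succ, ih, altQBinom, altQBinom, qBinom_succ_succ hq,
      Nat.choose_succ_succ' (k + 1), Nat.choose_one_right, pow_add]
    ring

theorem sum_altQBinom_succ {q : ℝ} (hq : ∀ n, qPoch q q n ≠ 0) (g : ℝ → ℝ) (m : ℕ) (z : ℝ) :
    ∑ k ∈ range (m + 2), altQBinom q (m + 1) k * g (z * q ^ k)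
      = ∑ k ∈ range (m + 1), altQBinom q m k * g (z * q ^ k)
        - q ^ (m + 1) * ∑ k ∈ range (m + 1), altQBinom q m k * g (q * z * q ^ k) := by
  have hsucc : ∀ k ∈ range (m + 1), altQBinom q (m + 1) (k + 1) * g (z * q ^ (k + 1))
      = altQBinom q m (k + 1) * g (z * q ^ (k + 1))
        - q ^ (m + 1) * (altQBinom q m k * g (q * z * q ^ k)) := by
    intro k hk
    obtain ⟨d, rfl⟩ := Nat.exists_eq_add_of_le (Nat.lt_succ_iff.mp (mem_range.mp hk))
    rw [altQBinom, altQBinom, altQBinom, qBinom_succ_succ' hq (Nat.le_add_right k d),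
      Nat.add_sub_cancel_left, Nat.choose_succ_succ' (k + 1), Nat.choose_one_right,
      show q * z * q ^ k = z * q ^ (k + 1) by ring]
    ring
  have hshift : ∑ k ∈ range (m + 1), altQBinom q m (k + 1) * g (z * q ^ (k + 1))
      + altQBinom q (m + 1) 0 * g (z * q ^ 0)
        = ∑ k ∈ range (m + 1), altQBinom q m k * g (z * q ^ k) := by
    have h := sum_range_succ' (fun k => altQBinom q m k * g (z * q ^ k)) (m + 1)
    rw [sum_range_succ, altQBinom_of_lt (Nat.lt_succ_self m), zero_mul, add_zero] at h
    rw [h, altQBinom_zero_right hq, altQBinom_zero_right hq]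
  rw [sum_range_succ', sum_congr rfl hsucc, sum_sub_distrib, ← mul_sum, sub_add_eq_add_sub, hshift]

theorem sum_altQBinom_mul_inv_eq {q : ℝ} (hq : ∀ n, qPoch q q n ≠ 0) (m : ℕ) {z : ℝ}
    (hz : qPoch z q (m + 1) ≠ 0) :
    ∑ k ∈ range (m + 1), altQBinom q m k * (1 - z * q ^ k)⁻¹ = qPoch q q m / qPoch z q (m + 1) := by
  induction m generalizing z with
  | zero => simp [altQBinom_zero_right hq, qPoch_succ, qPoch_zero, div_eq_mul_inv]
  | succ m ih =>
    have hsplit := qPoch_succ z q (m + 1)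
    have hshift := qPoch_succ' z q (m + 1)
    obtain ⟨hZ, ha⟩ := mul_ne_zero_iff.mp (hsplit ▸ hz)
    obtain ⟨-, hW⟩ := mul_ne_zero_iff.mp (hshift ▸ hz)
    rw [sum_altQBinom_succ hq (fun x => (1 - x)⁻¹), ih hZ, ih hW, qPoch_succ q q m, hsplit,
      eq_div_iff (mul_ne_zero hZ ha)]
    field_simp
    linear_combination (-qPoch q q m * q ^ (m + 1)) * hsplit.symm.trans hshift

theorem hasDerivAt_qPoch (q : ℝ) (n : ℕ) {z : ℝ} (hz : qPoch z q n ≠ 0) :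
    HasDerivAt (fun w => qPoch w q n)
      (-(qPoch z q n * ∑ k ∈ range n, q ^ k / (1 - z * q ^ k))) z := by
  induction n with
  | zero => simpa [qPoch_zero] using hasDerivAt_const z (1 : ℝ)
  | succ n ih =>
    obtain ⟨hP, ha⟩ := mul_ne_zero_iff.mp (qPoch_succ z q n ▸ hz)
    have h := (ih hP).mul (((hasDerivAt_id z).mul_const (q ^ n)).const_sub 1)
    rw [show (fun w => qPoch w q n) * (fun w => 1 - id w * q ^ n) = fun w => qPoch w q (n + 1) from
      funext fun w => (qPoch_succ w q n).symm] at h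
    refine h.congr_deriv ?_
    rw [qPoch_succ, sum_range_succ, id]
    linear_combination qPoch z q n * div_mul_cancel₀ (q ^ n) ha

theorem sum_altQBinom_mul_div_sq_eq {q : ℝ} (hq : ∀ n, qPoch q q n ≠ 0) (m : ℕ) {z : ℝ}
    (hz : qPoch z q (m + 1) ≠ 0) :
    ∑ k ∈ range (m + 1), altQBinom q m k * (q ^ k / (1 - z * q ^ k) ^ 2)
      = qPoch q q m / qPoch z q (m + 1) * ∑ k ∈ range (m + 1), q ^ k / (1 - z * q ^ k) := by
  have hP := hasDerivAt_qPoch q (m + 1) hz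
  have hsum : HasDerivAt (fun w => ∑ k ∈ range (m + 1), altQBinom q m k * (1 - w * q ^ k)⁻¹)
      (∑ k ∈ range (m + 1), altQBinom q m k * (q ^ k / (1 - z * q ^ k) ^ 2)) z := by
    refine HasDerivAt.fun_sum fun k hk => ?_
    have hk := qPoch_ne_zero_iff.mp hz k (mem_range.mp hk)
    refine ((((hasDerivAt_id z).mul_const (q ^ k)).const_sub 1).inv hk).const_mul
      (altQBinom q m k) |>.congr_deriv ?_
    simp
  have hquot : HasDerivAt (fun w => qPoch q q m / qPoch w q (m + 1))
      (qPoch q q m / qPoch z q (m + 1) * ∑ k ∈ range (m + 1), q ^ k / (1 - z * q ^ k)) z := by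
    refine ((hP.inv hz).const_mul (qPoch q q m)).congr_deriv ?_
    rw [neg_neg, sq, mul_div_mul_left _ _ hz, mul_div_assoc', div_mul_eq_mul_div]
  have hpartial : (fun w => ∑ k ∈ range (m + 1), altQBinom q m k * (1 - w * q ^ k)⁻¹)
      =ᶠ[𝓝 z] fun w => qPoch q q m / qPoch w q (m + 1) := by
    filter_upwards [hP.continuousAt.eventually_ne hz] with w hw
    exact sum_altQBinom_mul_inv_eq hq m hw
  exact hsum.unique (hquot.congr_of_eventuallyEq hpartial)

theorem sum_Ico_alternating_qBinom {q : ℝ} (hq : ∀ n, qPoch q q n ≠ 0) {m k : ℕ} (hk : k ≤ m + 1) :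
    ∑ i ∈ Ico (k + 1) (m + 2), (-1) ^ i * q ^ (i.choose 2) * qBinom q (m + 1) i
      = -altQBinom q m k := by
  rw [sum_Ico_eq_sub _ (by omega), sum_range_succ_alternating_qBinom hq m (m + 1),
    sum_range_succ_alternating_qBinom hq, altQBinom_of_lt (Nat.lt_succ_self m), zero_sub]

theorem alternating_qbinom_sum_deriv_general (q ζ : ℝ) (j : ℕ)
    (hq0 : 0 < q) (hq1 : q < 1) (hne : ∀ k < j, 1 - ζ * q ^ k ≠ 0) :
    ∑ i ∈ Finset.range (j + 1), ∑ k ∈ Finset.range i,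
        (-1 : ℝ) ^ i * q ^ (i * (i - 1) / 2) * qBinom q j i *
          (ζ * q ^ k / (1 - ζ * q ^ k) ^ 2)
      = -(qPoch q q (j - 1) / qPoch ζ q j) *
          ∑ k ∈ Finset.range j, ζ * q ^ k / (1 - ζ * q ^ k) := by
  have hq n : qPoch q q n ≠ 0 := (qPoch_self_pos hq0 hq1 n).ne'
  rcases j with _ | m
  · simp
  have hζ : qPoch ζ q (m + 1) ≠ 0 := qPoch_ne_zero_iff.mpr hne
  simp only [← Nat.choose_two_right, range_eq_Ico, ← sum_Ico_Ico_comm' 0 (m + 2)]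
  calc ∑ k ∈ Ico 0 (m + 2), ∑ i ∈ Ico (k + 1) (m + 2),
        (-1 : ℝ) ^ i * q ^ (i.choose 2) * qBinom q (m + 1) i * (ζ * q ^ k / (1 - ζ * q ^ k) ^ 2)
      = ∑ k ∈ range (m + 2), -altQBinom q m k * (ζ * q ^ k / (1 - ζ * q ^ k) ^ 2) := by
        rw [← range_eq_Ico]
        refine sum_congr rfl fun k hk => ?_
        rw [← sum_mul, sum_Ico_alternating_qBinom hq (Nat.lt_succ_iff.mp (mem_range.mp hk))]
    _ = -ζ * ∑ k ∈ range (m + 1), altQBinom q m k * (q ^ k / (1 - ζ * q ^ k) ^ 2) := by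
        rw [sum_range_succ, altQBinom_of_lt (Nat.lt_succ_self m), mul_sum]
        simp only [neg_zero, zero_mul, add_zero]
        exact sum_congr rfl fun k _ => by ring
    _ = _ := by
        rw [sum_altQBinom_mul_div_sq_eq hq m hζ, Nat.add_sub_cancel, ← range_eq_Ico,
          mul_sum, mul_sum, mul_sum]
        exact sum_congr rfl fun k _ => by ring

theorem alternating_qbinom_sum_deriv (q ζ : ℝ) (j : ℕ) (hj : 1 ≤ j)
    (hq0 : 0 < q) (hq1 : q < 1) (hne : ∀ k < j, 1 - ζ * q ^ k ≠ 0) :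
    ∑ i ∈ Finset.range (j + 1), ∑ k ∈ Finset.range i,
        (-1 : ℝ) ^ i * q ^ (i * (i - 1) / 2) * qBinom q j i *
          (ζ * q ^ k / (1 - ζ * q ^ k) ^ 2)
      = -(qPoch q q (j - 1) / qPoch ζ q j) *
          ∑ k ∈ Finset.range j, ζ * q ^ k / (1 - ζ * q ^ k) :=
  alternating_qbinom_sum_deriv_general q ζ j hq0 hq1 hne
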